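/- Let (C, J, P) be a geometric context and let F be an elementary scheme with an open atlas p : X → F, where X = ∐_{i∈I} h_{U_i} and each canonical morphism p_i : h_{U_i} → F is an open immersion. Then: (a) p exhibits F as the quotient of X by the equivalence relation R = X ×_F X, i.e., p is the coequalizer of the two projections R ⇉ X; (b) for every pair (i, j) of indices, setting R_{ij} = h_{U_i} ×_F h_{U_j}, the first projection R_{ij} → h_{U_i} is an open immersion of sheaves; (c) for every i, the diagonal morphism h_{U_i} → h_{U_i} ×_F h_{U_i} is an isomorphism. -/

import Mathlib

open CategoryTheory CategoryTheory.Limits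

universe u

namespace GeomCtx

variable {C : Type u} [SmallCategory C]

/-- An arrow `f` of a category is *cartesian* if pullbacks of arbitrary morphisms
along `f` exist. -/
def CartesianArrow {X Y : C} (f : X ⟶ Y) : Prop :=
  ∀ ⦃Z : C⦄ (g : Z ⟶ Y), HasPullback f g

/-- A family of arrows `(ρ i : Ui i ⟶ X)` is a `J`-covering if the sieve it
generates is a `J`-covering sieve. -/
def IsJCover (J : GrothendieckTopology C) {X : C} {I : Type u} (Ui : I → C)
    (ρ : ∀ i, Ui i ⟶ X) : Prop :=
  Sieve.generate (Presieve.ofArrows Ui ρ) ∈ J X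

/-- A Grothendieck pretopology (in the sense that does not presuppose the existence of
all pullbacks in `C`): a collection of covering families consisting of cartesian arrows,
stable under pullback, transitive, and containing the isomorphisms. -/
structure IsPretopology (Cov : ∀ U : C, Set (Presieve U)) : Prop where
  cartesian : ∀ ⦃U : C⦄, ∀ R ∈ Cov U, ∀ ⦃V : C⦄ (f : V ⟶ U), R f → CartesianArrow f
  pullback_stable : ∀ ⦃U V : C⦄ (g : V ⟶ U), ∀ R ∈ Cov U,
    ∃ S ∈ Cov V, ∀ ⦃W : C⦄ (f : W ⟶ V), S f →
      ∃ (Z : C) (r : Z ⟶ U) (h : W ⟶ Z), R r ∧ IsPullback h f r g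
  trans : ∀ ⦃U : C⦄ (R : Presieve U), R ∈ Cov U →
    ∀ (T : ∀ ⦃V : C⦄ ⦃f : V ⟶ U⦄, R f → Presieve V),
      (∀ ⦃V : C⦄ ⦃f : V ⟶ U⦄ (hf : R f), T hf ∈ Cov V) →
      R.bind T ∈ Cov U
  has_isos : ∀ ⦃U V : C⦄ (f : V ⟶ U) [IsIso f], Presieve.singleton f ∈ Cov U

/-- A Grothendieck topology is generated by a pretopology if its covering sieves are
exactly the sieves containing a sieve generated by a covering family of the pretopology. -/
def GeneratedByPretopology (J : GrothendieckTopology C) : Prop :=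
  ∃ Cov : ∀ U : C, Set (Presieve U), IsPretopology Cov ∧
    ∀ (U : C) (S : Sieve U), S ∈ J U ↔ ∃ R ∈ Cov U, Sieve.generate R ≤ S

/-- A *geometric context* `(C, J, P)`: a small category `C` with finite products, a
subcanonical Grothendieck topology `J` generated by a pretopology, and an admissible
class `P` of arrows of `C` which is `J`-local and locally cartesian, and such that `J`
is `P`-generated. -/
structure IsGeometricContext (J : GrothendieckTopology C) (P : MorphismProperty C) : Prop where
  /-- (GC1) `C` admits finite products. -/
  hasFiniteProducts : HasFiniteProducts C
  /-- (GC2a) `J` is subcanonical: every representable presheaf is a `J`-sheaf. -/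
  subcanonical : ∀ U : C, Presheaf.IsSheaf J (yoneda.obj U)
  /-- (GC2b) `J` is generated by a Grothendieck pretopology. -/
  pretopologyGenerated : GeneratedByPretopology J
  /-- (GC3a) `P` contains all identities. -/
  id_mem : ∀ U : C, P (𝟙 U)
  /-- (GC3b) `P` is stable under base change. -/
  stableUnderBaseChange : ∀ ⦃U' V' U V : C⦄ (f' : U' ⟶ V') (g' : U' ⟶ U)
    (g : V' ⟶ V) (f : U ⟶ V), IsPullback f' g' g f → P f → P f'
  /-- (GC3c) `P` is stable under composition. -/
  stableUnderComposition : ∀ ⦃U V W : C⦄ (f : U ⟶ V) (g : V ⟶ W), P f → P g → P (f ≫ g)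
  /-- (GC4) `P` is `J`-local. -/
  jLocal : ∀ ⦃U V : C⦄ (φ : U ⟶ V) ⦃I : Type u⦄ (Ui : I → C) (ρ : ∀ i, Ui i ⟶ U),
    IsJCover J Ui ρ → (∀ i, P (ρ i)) → (∀ i, P (ρ i ≫ φ)) → P φ
  /-- (GC5) `J` is `P`-generated: every `J`-covering admits a `P`-refinement. -/
  pGenerated : ∀ ⦃U : C⦄ ⦃A : Type u⦄ (Ua : A → C) (ρ : ∀ a, Ua a ⟶ U),
    IsJCover J Ua ρ → ∃ (I : Type u) (Vi : I → C) (φ : ∀ i, Vi i ⟶ U),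
      (∀ i, P (φ i)) ∧ ∀ a, ∃ (i : I) (g : Ua a ⟶ Vi i), g ≫ φ i = ρ a
  /-- (GC6) `P` is locally cartesian. -/
  locallyCartesian : ∀ ⦃U V : C⦄ (φ : U ⟶ V), P φ →
    ∃ (I : Type u) (Ui : I → C) (ρ : ∀ i, Ui i ⟶ U),
      IsJCover J Ui ρ ∧ (∀ i, P (ρ i)) ∧ ∀ i, CartesianArrow (ρ i ≫ φ)

variable (J : GrothendieckTopology C)

/-- `Subcanonicity` of `J`, phrased concretely. -/
abbrev Subcanonical : Prop := ∀ U : C, Presheaf.IsSheaf J (yoneda.obj U)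

/-- The sheaf represented by an object `U` of `C` (for a subcanonical topology). -/
def yo (hs : Subcanonical J) (U : C) : Sheaf J (Type u) :=
  ⟨yoneda.obj U, hs U⟩

/-- The morphism of representable sheaves induced by a morphism of `C`. -/
def yoMap (hs : Subcanonical J) {U V : C} (f : U ⟶ V) : yo J hs U ⟶ yo J hs V :=
  ⟨yoneda.map f⟩

instance hasCoproduct_sheaf_type {I : Type u} (f : I → Sheaf J (Type u)) : HasCoproduct f := by
  have h1 : HasWeakSheafify J (Type u) := inferInstance
  have h2 : HasColimitsOfShape (Discrete I) (Type u) := inferInstance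
  have h3 : HasColimitsOfShape (Discrete I) (Sheaf J (Type u)) := Sheaf.instHasColimitsOfShape
  exact HasColimitsOfShape.has_colimit _

/-- Two morphisms `f : A ⟶ X` and `g : B ⟶ X` of sheaves have the same image, as a
subobject of `X`: there is a common monomorphism into `X` through which both factor
epimorphically. -/
def SameImage {A B X : Sheaf J (Type u)} (f : A ⟶ X) (g : B ⟶ X) : Prop :=
  ∃ (W : Sheaf J (Type u)) (i : W ⟶ X) (p : A ⟶ W) (q : B ⟶ W),
    Mono i ∧ Epi p ∧ Epi q ∧ p ≫ i = f ∧ q ≫ i = g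

variable (P : MorphismProperty C)

/-- A morphism of sheaves `f : F ⟶ H` is an *open immersion* if for every `U : C` and
every morphism `g : h_U ⟶ H`, the projection `F ×_H h_U ⟶ h_U` is a monomorphism and
there is a family of `P`-morphisms `(Ui i ⟶ U)` such that the image of the induced
morphism `∐ h_{Ui i} ⟶ h_U` coincides, as a subobject of `h_U`, with the image of
`F ×_H h_U ⟶ h_U`. -/
def IsOpenImmersion (hs : Subcanonical J) {F H : Sheaf J (Type u)} (f : F ⟶ H) : Prop :=
  ∀ (U : C) (g : yo J hs U ⟶ H),
    Mono (pullback.snd f g) ∧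
    ∃ (I : Type u) (Ui : I → C) (ρ : ∀ i, Ui i ⟶ U),
      (∀ i, P (ρ i)) ∧
      SameImage J (Limits.Sigma.desc fun i => yoMap J hs (ρ i)) (pullback.snd f g)

/-- An *open atlas* of a sheaf `X`: a family of open immersions from representable
sheaves which is jointly epimorphic. A sheaf admitting an open atlas is an
*elementary scheme*. -/
def IsElementaryScheme (hs : Subcanonical J) (X : Sheaf J (Type u)) : Prop :=
  ∃ (I : Type u) (Ui : I → C) (p : ∀ i, yo J hs (Ui i) ⟶ X),
    (∀ i, IsOpenImmersion J P hs (p i)) ∧ Epi (Limits.Sigma.desc p)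

/-- A morphism of sheaves `f : F ⟶ H` is an *`S`-morphism* if for every `U : C` and
every `g : h_U ⟶ H` there is an open atlas `∐ h_{Ui i} ⟶ F ×_H h_U` such that each
induced composite `Ui i ⟶ U` (viewed in `C` via the Yoneda embedding) lies in `S`. -/
def IsSMorphism (hs : Subcanonical J) (S : MorphismProperty C)
    {F H : Sheaf J (Type u)} (f : F ⟶ H) : Prop :=
  ∀ (U : C) (g : yo J hs U ⟶ H),
    ∃ (I : Type u) (Ui : I → C) (p : ∀ i, yo J hs (Ui i) ⟶ pullback f g),
      (∀ i, IsOpenImmersion J P hs (p i)) ∧ Epi (Limits.Sigma.desc p) ∧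
      ∀ i, ∃ ρ : Ui i ⟶ U, yoMap J hs ρ = p i ≫ pullback.snd f g ∧ S ρ

/-- A morphism of sheaves `f : F ⟶ H` is *schematic* if for every `U : C` and every
`g : h_U ⟶ H` the pullback `F ×_H h_U` is an elementary scheme. -/
def IsSchematic (hs : Subcanonical J) {F H : Sheaf J (Type u)} (f : F ⟶ H) : Prop :=
  ∀ (U : C) (g : yo J hs U ⟶ H), IsElementaryScheme J P hs (pullback f g)

end GeomCtx

section Auxiliary

open Opposite GeomCtx

variable {C : Type u} [SmallCategory C] {J : GrothendieckTopology C}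

private lemma sheaf_pointwise_of_cancel (hs : Subcanonical J) {F G W : Sheaf J (Type u)}
    (f : F ⟶ G) (e : F ⟶ W)
    (hc : ∀ {Z : Sheaf J (Type u)} (g₁ g₂ : Z ⟶ F), g₁ ≫ f = g₂ ≫ f → g₁ ≫ e = g₂ ≫ e)
    {V : C} (x y : F.val.obj (op V)) (hxy : f.hom.app (op V) x = f.hom.app (op V) y) :
    e.hom.app (op V) x = e.hom.app (op V) y := by
  let a : yo J hs V ⟶ F := ⟨yonedaEquiv.symm x⟩
  let b : yo J hs V ⟶ F := ⟨yonedaEquiv.symm y⟩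
  have hab : a ≫ f = b ≫ f := by
    apply Sheaf.hom_ext
    apply yonedaEquiv.injective
    show yonedaEquiv (yonedaEquiv.symm x ≫ f.hom) = yonedaEquiv (yonedaEquiv.symm y ≫ f.hom)
    rw [yonedaEquiv_comp, yonedaEquiv_comp, Equiv.apply_symm_apply, Equiv.apply_symm_apply, hxy]
  have h := hc a b hab
  calc e.hom.app (op V) x
      = yonedaEquiv (yonedaEquiv.symm x ≫ e.hom) := by
        rw [yonedaEquiv_comp, Equiv.apply_symm_apply]
    _ = yonedaEquiv ((a ≫ e).hom) := rfl
    _ = yonedaEquiv ((b ≫ e).hom) := by rw [h]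
    _ = e.hom.app (op V) y := by
        show yonedaEquiv (yonedaEquiv.symm y ≫ e.hom) = _
        rw [yonedaEquiv_comp, Equiv.apply_symm_apply]

private lemma exists_desc (hs : Subcanonical J) {F G W : Sheaf J (Type u)} (f : F ⟶ G)
    (e : F ⟶ W) (ls : Presheaf.IsLocallySurjective J f.hom)
    (hc : ∀ {Z : Sheaf J (Type u)} (g₁ g₂ : Z ⟶ F), g₁ ≫ f = g₂ ≫ f → g₁ ≫ e = g₂ ≫ e) :
    ∃ l : G ⟶ W, f ≫ l = e := by
  haveI := ls
  have hW : Presieve.IsSheaf J W.val := (isSheaf_iff_isSheaf_of_type J W.val).1 W.cond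
  have hsep : Presieve.IsSeparated J W.val := hW.isSeparated
  have key : ∀ {V : C} (x y : F.val.obj (op V)), f.hom.app (op V) x = f.hom.app (op V) y →
      e.hom.app (op V) x = e.hom.app (op V) y :=
    fun x y h => sheaf_pointwise_of_cancel hs f e hc x y h
  have hlp : ∀ (U : Cᵒᵖ) (s : G.val.obj U) {V : C} (g : V ⟶ U.unop)
      (hg : (Presheaf.imageSieve f.hom s).arrows g),
      f.hom.app (op V) (Presheaf.localPreimage f.hom s g hg) = G.val.map g.op s :=
    fun U s V g hg => Presheaf.app_localPreimage f.hom s g hg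
  let x : ∀ (U : Cᵒᵖ) (s : G.val.obj U),
      Presieve.FamilyOfElements W.val (Presheaf.imageSieve f.hom s).arrows :=
    fun U s V g hg => e.hom.app (op V) (Presheaf.localPreimage f.hom s g hg)
  have hcompat : ∀ (U : Cᵒᵖ) (s : G.val.obj U), (x U s).Compatible := by
    intro U s V₁ V₂ Z ψ₁ ψ₂ g₁ g₂ h₁ h₂ hcomm
    have n₁ := ConcreteCategory.congr_hom (e.hom.naturality ψ₁.op) (Presheaf.localPreimage f.hom s g₁ h₁)
    have n₂ := ConcreteCategory.congr_hom (e.hom.naturality ψ₂.op) (Presheaf.localPreimage f.hom s g₂ h₂)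
    dsimp at n₁ n₂ ⊢
    rw [← n₁, ← n₂]
    apply key
    have m₁ := ConcreteCategory.congr_hom (f.hom.naturality ψ₁.op) (Presheaf.localPreimage f.hom s g₁ h₁)
    have m₂ := ConcreteCategory.congr_hom (f.hom.naturality ψ₂.op) (Presheaf.localPreimage f.hom s g₂ h₂)
    dsimp at m₁ m₂
    rw [m₁, m₂, hlp U s g₁ h₁, hlp U s g₂ h₂,
      ← FunctorToTypes.map_comp_apply, ← FunctorToTypes.map_comp_apply, ← op_comp, ← op_comp,
      hcomm]
  refine ⟨⟨⟨fun U => TypeCat.ofHom fun s =>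
      (hW _ (Presheaf.imageSieve_mem J f.hom s)).amalgamate (x U s) (hcompat U s), ?_⟩⟩, ?_⟩
  · intro U U' φ
    ext s
    dsimp
    apply (hsep _ (J.intersection_covering
      (Presheaf.imageSieve_mem J f.hom (G.val.map φ s))
      (J.pullback_stable φ.unop (Presheaf.imageSieve_mem J f.hom s)))).ext
    intro V g hg
    obtain ⟨hg₁, hg₂⟩ := hg
    rw [Presieve.IsSheafFor.valid_glue (hW _ (Presheaf.imageSieve_mem J f.hom (G.val.map φ s)))
        (hcompat U' (G.val.map φ s)) g hg₁,
      ← FunctorToTypes.map_comp_apply]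
    have hop : φ ≫ g.op = (g ≫ φ.unop).op := rfl
    rw [hop, Presieve.IsSheafFor.valid_glue (hW _ (Presheaf.imageSieve_mem J f.hom s))
        (hcompat U s) (g ≫ φ.unop) (by exact hg₂)]
    apply key
    rw [hlp U' (G.val.map φ s) g hg₁]
    erw [hlp U s (g ≫ φ.unop) (by exact hg₂)]
    rw [← FunctorToTypes.map_comp_apply, ← hop]
  · apply Sheaf.hom_ext
    ext U x0
    dsimp
    apply (hsep _ (Presheaf.imageSieve_mem J f.hom (f.hom.app U x0))).ext
    intro V g hg
    rw [Presieve.IsSheafFor.valid_glue (hW _ (Presheaf.imageSieve_mem J f.hom (f.hom.app U x0)))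
        (hcompat U (f.hom.app U x0)) g hg]
    have n := ConcreteCategory.congr_hom (e.hom.naturality g.op) x0
    dsimp at n
    rw [← n]
    apply key
    have m := ConcreteCategory.congr_hom (f.hom.naturality g.op) x0
    dsimp at m
    rw [hlp U (f.hom.app U x0) g hg, ← m]

private lemma effectiveEpi_of_epi (hs : Subcanonical J) {F G : Sheaf J (Type u)}
    (f : F ⟶ G) [Epi f] : EffectiveEpi f := by
  have ls : Sheaf.IsLocallySurjective f :=
    (Sheaf.isLocallySurjective_iff_epi f).2 inferInstance
  exact ⟨⟨{
    desc := fun {W} e hc => (exists_desc hs f e ls fun g₁ g₂ h => hc g₁ g₂ h).choose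
    fac := fun {W} e hc => (exists_desc hs f e ls fun g₁ g₂ h => hc g₁ g₂ h).choose_spec
    uniq := fun {W} e hc m hm => by
      rw [← cancel_epi f, hm,
        (exists_desc hs f e ls fun g₁ g₂ h => hc g₁ g₂ h).choose_spec] }⟩⟩

private lemma mono_of_openImmersion {P : MorphismProperty C} (hs : Subcanonical J)
    {F : Sheaf J (Type u)} {U : C} (f : yo J hs U ⟶ F)
    (hOI : IsOpenImmersion J P hs f) : Mono f := by
  have happ : ∀ V : Cᵒᵖ, Mono (f.hom.app V) := by
    intro V
    rw [mono_iff_injective]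
    obtain ⟨V⟩ := V
    intro (x : V ⟶ U) (y : V ⟶ U) hxy
    let g : yo J hs V ⟶ F := ⟨yonedaEquiv.symm (f.hom.app (op V) x)⟩
    have ha : yoMap J hs x ≫ f = g := by
      apply Sheaf.hom_ext
      apply yonedaEquiv.injective
      show yonedaEquiv (yoneda.map x ≫ f.hom) =
        yonedaEquiv (yonedaEquiv.symm (f.hom.app (op V) x))
      exact (yonedaEquiv_comp (yoneda.map x) f.hom).trans
        (by rw [yonedaEquiv_yoneda_map, Equiv.apply_symm_apply]; rfl)
    have hb : yoMap J hs y ≫ f = g := by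
      apply Sheaf.hom_ext
      apply yonedaEquiv.injective
      show yonedaEquiv (yoneda.map y ≫ f.hom) =
        yonedaEquiv (yonedaEquiv.symm (f.hom.app (op V) x))
      exact (yonedaEquiv_comp (yoneda.map y) f.hom).trans
        (by rw [yonedaEquiv_yoneda_map, Equiv.apply_symm_apply, hxy]; rfl)
    have hmono := (hOI V g).1
    let sa : yo J hs V ⟶ pullback f g :=
      pullback.lift (yoMap J hs x) (𝟙 _) (by rw [Category.id_comp]; exact ha)
    let sb : yo J hs V ⟶ pullback f g :=
      pullback.lift (yoMap J hs y) (𝟙 _) (by rw [Category.id_comp]; exact hb)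
    have hseq : sa = sb := by
      rw [← cancel_mono (pullback.snd f g)]
      simp [sa, sb]
      exact (pullback.lift_snd _ _ _).trans (pullback.lift_snd _ _ _).symm
    have hab : yoMap J hs x = yoMap J hs y := by
      calc yoMap J hs x = sa ≫ pullback.fst f g := (pullback.lift_fst _ _ _).symm
        _ = sb ≫ pullback.fst f g := by rw [hseq]
        _ = yoMap J hs y := pullback.lift_fst _ _ _
    have hab' := congrArg InducedCategory.Hom.hom hab
    exact yoneda.map_injective hab'
  haveI := happ
  exact (sheafToPresheaf J (Type u)).mono_of_mono_map (NatTrans.mono_of_mono_app f.hom)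

end Auxiliary


open GeomCtx in
/-- An elementary scheme `F` with open atlas `p : X = ∐ h_{U_i} ⟶ F` is the quotient
of `X` by the equivalence relation `R = X ×_F X`; the projections
`h_{U_i} ×_F h_{U_j} ⟶ h_{U_i}` are open immersions; and the diagonals
`h_{U_i} ⟶ h_{U_i} ×_F h_{U_i}` are isomorphisms. -/
theorem statement19 {C : Type u} [SmallCategory C] (J : GrothendieckTopology C)
    (P : MorphismProperty C) (hGC : IsGeometricContext J P)
    {F : Sheaf J (Type u)} {I : Type u} (Ui : I → C)
    (p : ∀ i, yo J hGC.subcanonical (Ui i) ⟶ F)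
    (hOI : ∀ i, IsOpenImmersion J P hGC.subcanonical (p i))
    (hEpi : Epi (Limits.Sigma.desc p)) :
    Nonempty (IsColimit (Cofork.ofπ (Limits.Sigma.desc p) pullback.condition :
      Cofork (pullback.fst (Limits.Sigma.desc p) (Limits.Sigma.desc p))
        (pullback.snd (Limits.Sigma.desc p) (Limits.Sigma.desc p)))) ∧
    (∀ i j, IsOpenImmersion J P hGC.subcanonical (pullback.fst (p i) (p j))) ∧
    (∀ i, IsIso (pullback.diagonal (p i))) := by
  refine ⟨?_, ?_, ?_⟩
  · haveI := hEpi
    haveI : EffectiveEpi (Sigma.desc p) := effectiveEpi_of_epi hGC.subcanonical (Sigma.desc p)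
    exact ⟨(regularEpiOfEffectiveEpi (Sigma.desc p)).isColimit⟩
  · intro i j U g
    let f := pullback.fst (p i) (p j)
    let e : pullback f g ≅ pullback (p j) (g ≫ p i) :=
      pullbackSymmetry f g ≪≫ pullbackRightPullbackFstIso (p i) (p j) g ≪≫
        pullbackSymmetry (g ≫ p i) (p j)
    have he : e.hom ≫ pullback.snd (p j) (g ≫ p i) = pullback.snd f g := by
      simp [e]
      exact pullbackSymmetry_hom_comp_fst f g
    obtain ⟨hm, I', Ui', ρ, hP, W0, i0, pp, q, hmono, hepip, hepiq, hpi, hqi⟩ :=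
      hOI j U (g ≫ p i)
    constructor
    · show Mono (pullback.snd f g)
      rw [← he]
      haveI := hm
      exact mono_comp _ _
    · refine ⟨I', Ui', ρ, hP, W0, i0, pp, e.hom ≫ q, hmono, hepip, ?_, hpi, ?_⟩
      · haveI := hepiq
        exact epi_comp _ _
      · rw [Category.assoc, hqi, he]
  · intro i
    haveI : Mono (p i) := mono_of_openImmersion hGC.subcanonical (p i) (hOI i)
    infer_instance
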